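/- Let (a,b) be a fictitious-play trajectory. Then for every round t ≥ 0: −ρ_t ≤ Σ_{i=1}^t (2·u_B^i − 1) ≤ ρ_t. -/

import Mathlib

open MeasureTheory

/-- Bob's choice of the left or right piece. -/
inductive Choice
  | L
  | R
deriving DecidableEq

/-- The cumulative valuation `V(x) = ∫_0^x v`. -/
noncomputable def cumul (v : ℝ → ℝ) (x : ℝ) : ℝ := ∫ y in (0:ℝ)..x, v y

/-- `v` is an integrable value density on `[0,1]`, bounded between `lo` and `hi`,
integrating to `1`. -/
def IsDensity (lo hi : ℝ) (v : ℝ → ℝ) : Prop :=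
  IntervalIntegrable v volume 0 1 ∧
  (∀ x ∈ Set.Icc (0:ℝ) 1, lo ≤ v x ∧ v x ≤ hi) ∧
  (∫ y in (0:ℝ)..1, v y) = 1

/-- Alice's round-`t` utility: if Bob picks `L` she gets `[a_t,1]`, else `[0,a_t]`. -/
noncomputable def uA (vA : ℝ → ℝ) (a : ℕ → ℝ) (b : ℕ → Choice) (t : ℕ) : ℝ :=
  if b t = Choice.L then 1 - cumul vA (a t) else cumul vA (a t)

/-- Bob's round-`t` utility: if he picks `L` he gets `[0,a_t]`, else `[a_t,1]`. -/
noncomputable def uB (vB : ℝ → ℝ) (a : ℕ → ℝ) (b : ℕ → Choice) (t : ℕ) : ℝ :=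
  if b t = Choice.L then cumul vB (a t) else 1 - cumul vB (a t)

/-- `α_t = r_t − ℓ_t`: number of `R` choices minus number of `L` choices up to round `t`. -/
noncomputable def alphaFP (b : ℕ → Choice) (t : ℕ) : ℝ :=
  ∑ i ∈ Finset.Icc 1 t, (if b i = Choice.R then (1:ℝ) else -1)

/-- `β_t = Σ_{i=1}^t (2 V_B(a_i) − 1)`. -/
noncomputable def betaFP (vB : ℝ → ℝ) (a : ℕ → ℝ) (t : ℕ) : ℝ :=
  ∑ i ∈ Finset.Icc 1 t, (2 * cumul vB (a i) - 1)

/-- The radius `ρ_t = |α_t| + |β_t|`. -/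
noncomputable def rhoFP (vB : ℝ → ℝ) (a : ℕ → ℝ) (b : ℕ → Choice) (t : ℕ) : ℝ :=
  |alphaFP b t| + |betaFP vB a t|

/-- `(a,b)` is a fictitious-play trajectory. -/
def IsFictitiousPlay (vB : ℝ → ℝ) (a : ℕ → ℝ) (b : ℕ → Choice) : Prop :=
  ∀ t : ℕ,
    (0 < alphaFP b t → a (t+1) = 1) ∧
    (alphaFP b t < 0 → a (t+1) = 0) ∧
    (0 < betaFP vB a t → b (t+1) = Choice.L) ∧
    (betaFP vB a t < 0 → b (t+1) = Choice.R)

/-- Round `t` is axis-crossing. -/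
def AxisCrossing (vB : ℝ → ℝ) (a : ℕ → ℝ) (b : ℕ → Choice) (t : ℕ) : Prop :=
  alphaFP b t = 0 ∨
  (betaFP vB a t ≤ 0 ∧ 0 < betaFP vB a (t+1)) ∨
  (0 ≤ betaFP vB a t ∧ betaFP vB a (t+1) < 0)

/-! Both bounds telescope. Bob's centered payoff in round `t + 1` is `±(2 V_B(a_{t+1}) - 1)`, the
step of `β`, and whenever `β_t ≠ 0` fictitious play makes him pick the sign that pushes `β` away
from `0`; so the payoff is at most the growth of `|β|`. Whenever `α_t ≠ 0` Alice cuts at an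
endpoint, so the payoff is `∓1`, and minus the payoff is exactly the step of `α`, again pushing
away from `0`; so minus the payoff is at most the growth of `|α|`. When `β_t = 0` or `α_t = 0`
the growth of the radius is the full step size, which bounds the payoff in absolute value. -/

open Finset

lemma cumul_mem_Icc {lo hi : ℝ} {v : ℝ → ℝ} (hv : IsDensity lo hi v) (hlo : 0 ≤ lo)
    {x : ℝ} (hx : x ∈ Set.Icc (0:ℝ) 1) : cumul v x ∈ Set.Icc (0:ℝ) 1 := by
  obtain ⟨hint, hbd, hone⟩ := hv
  have hnonneg : ∀ y ∈ Set.Icc (0:ℝ) 1, 0 ≤ v y := fun y hy => hlo.trans (hbd y hy).1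
  constructor
  · exact intervalIntegral.integral_nonneg hx.1
      fun y hy => hnonneg y ⟨hy.1, hy.2.trans hx.2⟩
  · rw [← hone]
    refine intervalIntegral.integral_mono_interval le_rfl hx.1 hx.2 ?_ hint
    filter_upwards [ae_restrict_mem measurableSet_Ioc] with y hy
    exact hnonneg y (Set.Ioc_subset_Icc_self hy)

lemma le_abs_add_sub_abs {s d e : ℝ} (he : |e| ≤ |d|) (hpos : 0 < s → e = d)
    (hneg : s < 0 → e = -d) : e ≤ |s + d| - |s| := by
  rcases lt_trichotomy s 0 with hs | rfl | hs
  · rw [hneg hs, abs_of_neg hs]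
    linarith [neg_abs_le (s + d)]
  · simpa using (le_abs_self e).trans he
  · rw [hpos hs, abs_of_pos hs]
    linarith [le_abs_self (s + d)]

lemma sum_Icc_le_of_le_sub {x g : ℕ → ℝ} (hg : g 0 = 0) (h : ∀ t, x (t + 1) ≤ g (t + 1) - g t)
    (t : ℕ) : ∑ i ∈ Icc 1 t, x i ≤ g t := by
  induction t with
  | zero => simp [hg]
  | succ t ih =>
    rw [sum_Icc_succ_top (Nat.le_add_left 1 t)]
    linarith [h t]

lemma alphaFP_succ (b : ℕ → Choice) (t : ℕ) :
    alphaFP b (t + 1) = alphaFP b t + if b (t + 1) = Choice.R then 1 else -1 :=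
  sum_Icc_succ_top (Nat.le_add_left 1 t) _

lemma betaFP_succ (vB : ℝ → ℝ) (a : ℕ → ℝ) (t : ℕ) :
    betaFP vB a (t + 1) = betaFP vB a t + (2 * cumul vB (a (t + 1)) - 1) :=
  sum_Icc_succ_top (Nat.le_add_left 1 t) _

lemma abs_two_mul_uB_sub_one (vB : ℝ → ℝ) (a : ℕ → ℝ) (b : ℕ → Choice) (t : ℕ) :
    |2 * uB vB a b t - 1| = |2 * cumul vB (a t) - 1| := by
  unfold uB
  split_ifs
  · rfl
  · rw [← abs_neg]
    congr 1
    ring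

namespace IsFictitiousPlay

variable {vB : ℝ → ℝ} {a : ℕ → ℝ} {b : ℕ → Choice}

lemma two_mul_uB_succ_sub_one_le (hfp : IsFictitiousPlay vB a b) (t : ℕ) :
    2 * uB vB a b (t + 1) - 1 ≤ |betaFP vB a (t + 1)| - |betaFP vB a t| := by
  rw [betaFP_succ]
  refine le_abs_add_sub_abs (abs_two_mul_uB_sub_one vB a b _).le (fun h => ?_) (fun h => ?_)
  · simp [uB, (hfp t).2.2.1 h]
  · simp only [uB, (hfp t).2.2.2 h, reduceCtorEq, if_false]
    ring

lemma neg_two_mul_uB_succ_sub_one_le {lo hi : ℝ} (hfp : IsFictitiousPlay vB a b)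
    (hv : IsDensity lo hi vB) (hlo : 0 ≤ lo) {t : ℕ} (ha : a (t + 1) ∈ Set.Icc (0:ℝ) 1) :
    -(2 * uB vB a b (t + 1) - 1) ≤ |alphaFP b (t + 1)| - |alphaFP b t| := by
  have hcumul_one : cumul vB 1 = 1 := hv.2.2
  have hcumul_zero : cumul vB 0 = 0 := intervalIntegral.integral_same
  have hc := cumul_mem_Icc hv hlo ha
  rw [alphaFP_succ]
  refine le_abs_add_sub_abs ?_ (fun h => ?_) (fun h => ?_)
  · have hstep : |(if b (t + 1) = Choice.R then (1:ℝ) else -1)| = 1 := by split_ifs <;> simp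
    rw [abs_neg, abs_two_mul_uB_sub_one, hstep, abs_le]
    constructor <;> linarith [hc.1, hc.2]
  · cases hb : b (t + 1) <;> simp [uB, hb, (hfp t).1 h, hcumul_one]
    norm_num
  · cases hb : b (t + 1) <;> simp [uB, hb, (hfp t).2.1 h, hcumul_zero]
    norm_num

end IsFictitiousPlay

theorem bob_payoff_bounded_by_radius_general
    (δ Δ : ℝ) (hδ : 0 < δ)
    (vB : ℝ → ℝ) (hB : IsDensity δ Δ vB)
    (a : ℕ → ℝ) (b : ℕ → Choice)
    (ha : ∀ t : ℕ, 1 ≤ t → a t ∈ Set.Icc (0:ℝ) 1)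
    (hfp : IsFictitiousPlay vB a b) (t : ℕ) :
    -(rhoFP vB a b t) ≤ ∑ i ∈ Finset.Icc 1 t, (2 * uB vB a b i - 1) ∧
    ∑ i ∈ Finset.Icc 1 t, (2 * uB vB a b i - 1) ≤ rhoFP vB a b t := by
  have hupper : ∑ i ∈ Icc 1 t, (2 * uB vB a b i - 1) ≤ |betaFP vB a t| :=
    sum_Icc_le_of_le_sub (g := fun t => |betaFP vB a t|) (by simp [betaFP])
      hfp.two_mul_uB_succ_sub_one_le t
  have hlower : ∑ i ∈ Icc 1 t, -(2 * uB vB a b i - 1) ≤ |alphaFP b t| :=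
    sum_Icc_le_of_le_sub (g := fun t => |alphaFP b t|) (by simp [alphaFP])
      (fun s => hfp.neg_two_mul_uB_succ_sub_one_le hB hδ.le (ha (s + 1) (Nat.le_add_left 1 s))) t
  rw [sum_neg_distrib] at hlower
  unfold rhoFP
  constructor <;> linarith [abs_nonneg (alphaFP b t), abs_nonneg (betaFP vB a t)]

/-- Under fictitious play, Bob's centered cumulative payoff is bounded by
the radius: `−ρ_t ≤ Σ_{i=1}^t (2u_B^i − 1) ≤ ρ_t` for every `t`. -/
theorem bob_payoff_bounded_by_radius
    (δ Δ : ℝ) (hδ : 0 < δ) (hδΔ : δ ≤ Δ)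
    (vA vB : ℝ → ℝ) (hA : IsDensity δ Δ vA) (hB : IsDensity δ Δ vB)
    (a : ℕ → ℝ) (b : ℕ → Choice)
    (ha : ∀ t : ℕ, 1 ≤ t → a t ∈ Set.Icc (0:ℝ) 1)
    (hfp : IsFictitiousPlay vB a b) (t : ℕ) :
    -(rhoFP vB a b t) ≤ ∑ i ∈ Finset.Icc 1 t, (2 * uB vB a b i - 1) ∧
    ∑ i ∈ Finset.Icc 1 t, (2 * uB vB a b i - 1) ≤ rhoFP vB a b t :=
  bob_payoff_bounded_by_radius_general δ Δ hδ vB hB a b ha hfp t
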